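/- Let p be a pmf on ℕ with p(y) > 0 for all y and finite mean Σ_y y·p(y) < ∞, define h₀(y) = (y+1)p(y+1)/p(y) − y for y ∈ ℕ, and let h̃ : ℕ → ℝ satisfy Σ_y p(y)|h̃(y)| < ∞. Fix λ > 0 and define κ_λ(u,v) = h̃(u)h̃(v)K_λ(u,v) + h̃(u)·v·Δ_v K_λ(u+1,v) + h̃(v)·u·Δ_u K_λ(u,v+1) + u·v·Δ_{u,v}K_λ(u,v). Then both double series below converge absolutely and Σ_{u=0}^∞ Σ_{v=0}^∞ p(u)p(v)(h̃(u)−h₀(u)) K_λ(u+1,v+1) (h̃(v)−h₀(v)) = Σ_{u=0}^∞ Σ_{v=0}^∞ p(u)p(v) κ_λ(u,v). -/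

import Mathlib

/-!
Multiplying out the score, `p(u) (h̃(u) - h₀(u)) = p(u) h̃(u) - (m(u+1) - m(u))` with `m(u) = u p(u)`,
so summation by parts gives, for every bounded `f`, the Stein identity
`∑ p(u) (h̃ - h₀)(u) f(u+1) = ∑ p(u) 𝒜f(u)`, where `𝒜f(u) = h̃(u) f(u+1) + u (f(u+1) - f(u))`.
Since `|𝒜f(u)| ≤ (|h̃(u)| + 2u) sup |f|` and the RBF kernel is bounded by `1`, the identity can be
applied first in `v` and then in `u`, which turns the quadratic form into
`∑∑ p(u) p(v) 𝒜ᵤ𝒜ᵥ K(u, v)`; by translation invariance of `K` this integrand is `κ_λ(u, v)`.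
The same bounds give the absolute convergence of both double series.
-/

noncomputable def steinOp (h f : ℕ → ℝ) (u : ℕ) : ℝ :=
  h u * f (u + 1) + u * (f (u + 1) - f u)

/-- `p(u) (h(u) - h₀(u))` with the score `h₀(u) = (u+1) p(u+1) / p(u) - u` multiplied out, so that
no division by `p(u)` occurs. -/
noncomputable def steinResidual (p h : ℕ → ℝ) (u : ℕ) : ℝ :=
  p u * h u - ((u + 1) * p (u + 1) - u * p u)

noncomputable def steinEnvelope (p h : ℕ → ℝ) (u : ℕ) : ℝ :=
  |p u| * (|h u| + 2 * u)

theorem summable_mul_of_abs_le {ι : Type*} {m f : ι → ℝ} {C : ℝ} (hm : Summable m)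
    (hf : ∀ i, |f i| ≤ C) : Summable fun i => m i * f i :=
  .of_norm_bounded (hm.abs.mul_right C) fun i => by
    rw [Real.norm_eq_abs, abs_mul]
    exact mul_le_mul_of_nonneg_left (hf i) (abs_nonneg _)

theorem summable_abs_of_abs_le_mul {ι ι' : Type*} {a : ι → ℝ} {b : ι' → ℝ} {F : ι × ι' → ℝ}
    (ha : Summable a) (hb : Summable b) (hF : ∀ i j, |F (i, j)| ≤ |a i| * |b j|) :
    Summable fun x => |F x| :=
  .of_nonneg_of_le (fun _ => abs_nonneg _) (fun x => hF x.1 x.2)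
    (ha.abs.mul_of_nonneg hb.abs (fun _ => abs_nonneg _) fun _ => abs_nonneg _)

theorem tsum_sub_mul_succ_eq_tsum_mul_sub {m f : ℕ → ℝ} {C : ℝ} (hm : Summable m) (hm0 : m 0 = 0)
    (hf : ∀ u, |f u| ≤ C) :
    ∑' u, (m (u + 1) - m u) * f (u + 1) = ∑' u, m u * (f u - f (u + 1)) := by
  have hmf : Summable fun u => m u * f u := summable_mul_of_abs_le hm hf
  have hmf' : Summable fun u => m u * f (u + 1) := summable_mul_of_abs_le hm fun u => hf (u + 1)
  have hshift : ∑' u, m (u + 1) * f (u + 1) = ∑' u, m u * f u := by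
    rw [hmf.tsum_eq_zero_add, hm0, zero_mul, zero_add]
  calc ∑' u, (m (u + 1) - m u) * f (u + 1)
      = ∑' u, m (u + 1) * f (u + 1) - ∑' u, m u * f (u + 1) := by
        simp_rw [sub_mul]
        exact ((summable_nat_add_iff 1).mpr hmf).tsum_sub hmf'
    _ = ∑' u, m u * f u - ∑' u, m u * f (u + 1) := by rw [hshift]
    _ = ∑' u, m u * (f u - f (u + 1)) := by
        simp_rw [mul_sub]
        exact (hmf.tsum_sub hmf').symm

section Stein

variable {p h : ℕ → ℝ}

theorem summable_steinResidual (hph : Summable fun u => p u * h u)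
    (hmean : Summable fun u : ℕ => (u : ℝ) * p u) : Summable (steinResidual p h) := by
  have hshift : Summable fun u : ℕ => ((u + 1 : ℕ) : ℝ) * p (u + 1) :=
    (summable_nat_add_iff 1).mpr hmean
  refine (hph.sub (hshift.sub hmean)).congr fun u => ?_
  simp only [steinResidual]
  push_cast
  ring

theorem summable_steinEnvelope (hph : Summable fun u => p u * h u)
    (hmean : Summable fun u : ℕ => (u : ℝ) * p u) : Summable (steinEnvelope p h) :=
  (hph.abs.add (hmean.abs.mul_left 2)).congr fun u => by
    rw [steinEnvelope, abs_mul, abs_mul, Nat.abs_cast]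
    ring

theorem abs_steinOp_le {f : ℕ → ℝ} {C : ℝ} (hf : ∀ x, |f x| ≤ C) (u : ℕ) :
    |steinOp h f u| ≤ (|h u| + 2 * u) * C := by
  have hdiff : |f (u + 1) - f u| ≤ 2 * C := by
    linarith [abs_sub (f (u + 1)) (f u), hf (u + 1), hf u]
  calc |steinOp h f u| ≤ |h u * f (u + 1)| + |u * (f (u + 1) - f u)| := abs_add_le _ _
    _ = |h u| * |f (u + 1)| + u * |f (u + 1) - f u| := by rw [abs_mul, abs_mul, Nat.abs_cast]
    _ ≤ |h u| * C + u * (2 * C) := by gcongr; exact hf _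
    _ = (|h u| + 2 * u) * C := by ring

theorem abs_mul_steinOp_le {f : ℕ → ℝ} {C : ℝ} (hf : ∀ x, |f x| ≤ C) (u : ℕ) :
    |p u * steinOp h f u| ≤ steinEnvelope p h u * C := by
  rw [abs_mul, steinEnvelope, mul_assoc]
  exact mul_le_mul_of_nonneg_left (abs_steinOp_le hf u) (abs_nonneg _)

theorem summable_mul_steinOp (hph : Summable fun u => p u * h u)
    (hmean : Summable fun u : ℕ => (u : ℝ) * p u) {f : ℕ → ℝ} {C : ℝ} (hf : ∀ x, |f x| ≤ C) :
    Summable fun u => p u * steinOp h f u :=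
  .of_norm_bounded ((summable_steinEnvelope hph hmean).mul_right C) (abs_mul_steinOp_le hf)

theorem abs_tsum_mul_steinOp_le (hph : Summable fun u => p u * h u)
    (hmean : Summable fun u : ℕ => (u : ℝ) * p u) {f : ℕ → ℝ} {C : ℝ} (hf : ∀ x, |f x| ≤ C) :
    |∑' u, p u * steinOp h f u| ≤ (∑' u, steinEnvelope p h u) * C := by
  rw [← tsum_mul_right]
  exact tsum_of_norm_bounded (f := fun u => p u * steinOp h f u)
    ((summable_steinEnvelope hph hmean).mul_right C).hasSum (abs_mul_steinOp_le hf)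

/-- The Stein identity; the boundary term of the summation by parts vanishes since `u p(u) = 0` at
`u = 0`. -/
theorem tsum_steinResidual_mul (hph : Summable fun u => p u * h u)
    (hmean : Summable fun u : ℕ => (u : ℝ) * p u) {f : ℕ → ℝ} {C : ℝ} (hf : ∀ x, |f x| ≤ C) :
    ∑' u, steinResidual p h u * f (u + 1) = ∑' u, p u * steinOp h f u := by
  set m : ℕ → ℝ := fun u => u * p u
  have hphf : Summable fun u => p u * h u * f (u + 1) :=
    summable_mul_of_abs_le hph fun u => hf (u + 1)
  have hdm : Summable fun u => (m (u + 1) - m u) * f (u + 1) :=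
    summable_mul_of_abs_le (((summable_nat_add_iff 1).mpr hmean).sub hmean) fun u => hf (u + 1)
  have hmf : Summable fun u => m u * (f u - f (u + 1)) :=
    summable_mul_of_abs_le hmean fun u => (abs_sub _ _).trans (add_le_add (hf u) (hf (u + 1)))
  calc ∑' u, steinResidual p h u * f (u + 1)
      = ∑' u, (p u * h u * f (u + 1) - (m (u + 1) - m u) * f (u + 1)) :=
        tsum_congr fun u => by simp only [steinResidual, m]; push_cast; ring
    _ = ∑' u, p u * h u * f (u + 1) - ∑' u, m u * (f u - f (u + 1)) := by
        rw [hphf.tsum_sub hdm, tsum_sub_mul_succ_eq_tsum_mul_sub hmean (by simp [m]) hf]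
    _ = ∑' u, p u * steinOp h f u := by
        rw [← hphf.tsum_sub hmf]
        exact tsum_congr fun u => by simp only [steinOp, m]; ring

variable {G : ℕ → ℕ → ℝ} {C : ℝ}

theorem summable_abs_steinResidual_mul (hph : Summable fun u => p u * h u)
    (hmean : Summable fun u : ℕ => (u : ℝ) * p u) (hG : ∀ x y, |G x y| ≤ C) :
    Summable fun uv : ℕ × ℕ =>
      |steinResidual p h uv.1 * steinResidual p h uv.2 * G (uv.1 + 1) (uv.2 + 1)| := by
  refine summable_abs_of_abs_le_mul (summable_steinResidual hph hmean)
    ((summable_steinResidual hph hmean).mul_right C) fun u v => ?_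
  rw [abs_mul, abs_mul, abs_mul, mul_assoc]
  exact mul_le_mul_of_nonneg_left
    (mul_le_mul_of_nonneg_left ((hG _ _).trans (le_abs_self C)) (abs_nonneg _)) (abs_nonneg _)

theorem summable_abs_mul_steinOp_steinOp (hph : Summable fun u => p u * h u)
    (hmean : Summable fun u : ℕ => (u : ℝ) * p u) (hG : ∀ x y, |G x y| ≤ C) :
    Summable fun uv : ℕ × ℕ =>
      |p uv.1 * p uv.2 * steinOp h (fun x => steinOp h (G x) uv.2) uv.1| := by
  have hC : 0 ≤ C := (abs_nonneg _).trans (hG 0 0)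
  refine summable_abs_of_abs_le_mul (summable_steinEnvelope hph hmean)
    ((summable_steinEnvelope hph hmean).mul_right C) fun u v => ?_
  have hv : ∀ x, |steinOp h (G x) v| ≤ (|h v| + 2 * v) * C := fun x => abs_steinOp_le (hG x) v
  have henv : ∀ w, 0 ≤ steinEnvelope p h w := fun w => by unfold steinEnvelope; positivity
  rw [abs_of_nonneg (henv u), abs_of_nonneg (mul_nonneg (henv v) hC), mul_comm (p u), mul_assoc,
    abs_mul]
  calc |p v| * |p u * steinOp h (fun x => steinOp h (G x) v) u|
      ≤ |p v| * (steinEnvelope p h u * ((|h v| + 2 * v) * C)) := by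
        gcongr; exact abs_mul_steinOp_le hv u
    _ = steinEnvelope p h u * (steinEnvelope p h v * C) := by
        unfold steinEnvelope; ring

theorem tsum_tsum_steinResidual_mul (hph : Summable fun u => p u * h u)
    (hmean : Summable fun u : ℕ => (u : ℝ) * p u) (hG : ∀ x y, |G x y| ≤ C) :
    ∑' u, ∑' v, steinResidual p h u * steinResidual p h v * G (u + 1) (v + 1)
      = ∑' u, ∑' v, p u * p v * steinOp h (fun x => steinOp h (G x) v) u := by
  set F : ℕ → ℝ := fun x => ∑' v, p v * steinOp h (G x) v
  have hsum : ∀ x, Summable fun v => p v * steinOp h (G x) v :=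
    fun x => summable_mul_steinOp hph hmean (hG x)
  have hF : ∀ x, |F x| ≤ (∑' v, steinEnvelope p h v) * C :=
    fun x => abs_tsum_mul_steinOp_le hph hmean (hG x)
  have hinner : ∀ u, ∑' v, steinResidual p h u * steinResidual p h v * G (u + 1) (v + 1)
      = steinResidual p h u * F (u + 1) := fun u => by
    rw [show F (u + 1) = ∑' v, steinResidual p h v * G (u + 1) (v + 1) from
      (tsum_steinResidual_mul hph hmean (hG (u + 1))).symm, ← tsum_mul_left]
    exact tsum_congr fun v => by ring
  have houter : ∀ u, p u * steinOp h F u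
      = ∑' v, p u * p v * steinOp h (fun x => steinOp h (G x) v) u := fun u => by
    change p u * (h u * F (u + 1) + u * (F (u + 1) - F u)) = _
    rw [← (hsum (u + 1)).tsum_sub (hsum u), ← tsum_mul_left, ← tsum_mul_left,
      ← ((hsum (u + 1)).mul_left _).tsum_add (((hsum (u + 1)).sub (hsum u)).mul_left _),
      ← tsum_mul_left]
    exact tsum_congr fun v => by simp only [steinOp]; ring
  calc _ = ∑' u, steinResidual p h u * F (u + 1) := tsum_congr hinner
    _ = ∑' u, p u * steinOp h F u := tsum_steinResidual_mul hph hmean hF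
    _ = _ := tsum_congr houter

end Stein

theorem steinOp_steinOp_of_shift_invariant (h : ℕ → ℝ) {K : ℕ → ℕ → ℝ}
    (hK : ∀ x y, K (x + 1) (y + 1) = K x y) (u v : ℕ) :
    steinOp h (fun x => steinOp h (K x) v) u =
      h u * h v * K u v
      + h u * v * (K (u + 1) (v + 1) - K (u + 1) v)
      + h v * u * (K (u + 1) (v + 1) - K u (v + 1))
      + u * v * (K (u + 1) (v + 1) - K (u + 1) v - K u (v + 1) + K u v) := by
  simp only [steinOp, hK]
  ring

theorem ksd_rkhs_representation_squared_loss_general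
    (p : ℕ → ℝ) (hp : ∀ y, 0 < p y)
    (hmean : Summable fun y : ℕ => (y : ℝ) * p y)
    (h₀ : ℕ → ℝ) (hh₀ : ∀ y : ℕ, h₀ y = ((y : ℝ) + 1) * p (y + 1) / p y - (y : ℝ))
    (htil : ℕ → ℝ) (hint : Summable fun y : ℕ => p y * |htil y|)
    (lam : ℝ) (hlam : 0 < lam)
    (K : ℕ → ℕ → ℝ)
    (hK : ∀ u v : ℕ, K u v = Real.exp (-((u : ℝ) - (v : ℝ)) ^ 2 / (2 * lam)))
    (κ : ℕ → ℕ → ℝ)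
    (hκ : ∀ u v : ℕ, κ u v =
        htil u * htil v * K u v
        + htil u * (v : ℝ) * (K (u + 1) (v + 1) - K (u + 1) v)
        + htil v * (u : ℝ) * (K (u + 1) (v + 1) - K u (v + 1))
        + (u : ℝ) * (v : ℝ) * (K (u + 1) (v + 1) - K (u + 1) v - K u (v + 1) + K u v)) :
    (Summable fun uv : ℕ × ℕ =>
        |p uv.1 * p uv.2 * (htil uv.1 - h₀ uv.1) * K (uv.1 + 1) (uv.2 + 1)
          * (htil uv.2 - h₀ uv.2)|) ∧
    (Summable fun uv : ℕ × ℕ => |p uv.1 * p uv.2 * κ uv.1 uv.2|) ∧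
    ∑' u : ℕ, ∑' v : ℕ, p u * p v * (htil u - h₀ u) * K (u + 1) (v + 1) * (htil v - h₀ v)
      = ∑' u : ℕ, ∑' v : ℕ, p u * p v * κ u v := by
  have hK_le : ∀ x y, |K x y| ≤ 1 := fun x y => by
    rw [hK, abs_of_pos (Real.exp_pos _), Real.exp_le_one_iff]
    exact div_nonpos_of_nonpos_of_nonneg (neg_nonpos.2 (sq_nonneg _)) (by positivity)
  have hK_shift : ∀ x y, K (x + 1) (y + 1) = K x y := fun x y => by
    rw [hK, hK]
    push_cast
    ring_nf
  have hph : Summable fun u => p u * htil u :=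
    (hint.congr fun u => by rw [abs_mul, abs_of_pos (hp u)]).of_abs
  have hresidual : ∀ u v, p u * p v * (htil u - h₀ u) * K (u + 1) (v + 1) * (htil v - h₀ v)
      = steinResidual p htil u * steinResidual p htil v * K (u + 1) (v + 1) := fun u v => by
    simp only [steinResidual, hh₀]
    field_simp [(hp u).ne', (hp v).ne']
  have hκ_steinOp : ∀ u v, κ u v = steinOp htil (fun x => steinOp htil (K x) v) u :=
    fun u v => by rw [hκ, steinOp_steinOp_of_shift_invariant htil hK_shift]
  simp_rw [hresidual, hκ_steinOp]
  exact ⟨summable_abs_steinResidual_mul hph hmean hK_le,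
    summable_abs_mul_steinOp_steinOp hph hmean hK_le,
    tsum_tsum_steinResidual_mul hph hmean hK_le⟩

/-- RKHS representation of the kernelized Stein discrepancy under the regular squared
error loss (k = 0): the Stein-discrepancy quadratic form (with kernel `K_λ(u+1,v+1)`)
equals the double expectation of the Stein kernel `κ_λ`, both double series converging
absolutely. -/
theorem ksd_rkhs_representation_squared_loss
    (p : ℕ → ℝ) (hp : ∀ y, 0 < p y) (hp1 : ∑' y : ℕ, p y = 1)
    (hmean : Summable fun y : ℕ => (y : ℝ) * p y)
    (h₀ : ℕ → ℝ) (hh₀ : ∀ y : ℕ, h₀ y = ((y : ℝ) + 1) * p (y + 1) / p y - (y : ℝ))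
    (htil : ℕ → ℝ) (hint : Summable fun y : ℕ => p y * |htil y|)
    (lam : ℝ) (hlam : 0 < lam)
    (K : ℕ → ℕ → ℝ)
    (hK : ∀ u v : ℕ, K u v = Real.exp (-((u : ℝ) - (v : ℝ)) ^ 2 / (2 * lam)))
    (κ : ℕ → ℕ → ℝ)
    (hκ : ∀ u v : ℕ, κ u v =
        htil u * htil v * K u v
        + htil u * (v : ℝ) * (K (u + 1) (v + 1) - K (u + 1) v)
        + htil v * (u : ℝ) * (K (u + 1) (v + 1) - K u (v + 1))
        + (u : ℝ) * (v : ℝ) * (K (u + 1) (v + 1) - K (u + 1) v - K u (v + 1) + K u v)) :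
    (Summable fun uv : ℕ × ℕ =>
        |p uv.1 * p uv.2 * (htil uv.1 - h₀ uv.1) * K (uv.1 + 1) (uv.2 + 1)
          * (htil uv.2 - h₀ uv.2)|) ∧
    (Summable fun uv : ℕ × ℕ => |p uv.1 * p uv.2 * κ uv.1 uv.2|) ∧
    ∑' u : ℕ, ∑' v : ℕ, p u * p v * (htil u - h₀ u) * K (u + 1) (v + 1) * (htil v - h₀ v)
      = ∑' u : ℕ, ∑' v : ℕ, p u * p v * κ u v :=
  ksd_rkhs_representation_squared_loss_general p hp hmean h₀ hh₀ htil hint lam hlam K hK κ hκ
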